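/- Let R be a fluid bisimulation between finite-state RLFTSs N and N′ with state types S and S′, and suppose F assigns to every x > 0 and s ∈ S a real F(x)(s) with each x ↦ F(x)(s) differentiable on (0,∞) and satisfying, for all x > 0 and all s ∈ S, RP(s)·(d/dx)F(x)(s) = Σ_{u∈S} RM(u,s)·F(x)(u) − RE(s)·F(x)(s) (the stationary fluid distribution equations dF/dx·R = F·Q). Then for every R-equivalence class H, the aggregate G_H(x) = Σ_{s∈H∩S} F(x)(s) satisfies the quotient equation RP(H)·G_H′(x) = Σ_{H̃} RM(H̃,H)·G_{H̃}(x) − RE(H)·G_H(x) for all x > 0, where the sum ranges over all R-equivalence classes and RP(H), RE(H), RM(H̃,H) denote the common values of RP, RE and RM(·,H) on the corresponding classes. -/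
import Mathlib


open scoped BigOperators

/-- A rated labeled fluid transition system (RLFTS) over a type `Act` of actions. -/
structure RLFTS (Act : Type) where
  S : Type
  E : Type
  s0 : S
  src : E → S
  tgt : E → S
  rate : E → ℝ
  label : E → Act
  RP : S → ℝ
  rate_pos : ∀ e, 0 < rate e
  out_finite : ∀ s : S, {e : E | src e = s}.Finite
  out_nonempty : ∀ s : S, ∃ e : E, src e = s

namespace RLFTS

variable {Act : Type}

/-- Exit rate of a state. -/
noncomputable def RE (N : RLFTS Act) (s : N.S) : ℝ :=
  ∑ᶠ e ∈ {e : N.E | N.src e = s}, N.rate e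

/-- Average sojourn time in a state. -/
noncomputable def SJ (N : RLFTS Act) (s : N.S) : ℝ := 1 / N.RE s

/-- Firing probability of an edge. -/
noncomputable def PTe (N : RLFTS Act) (e : N.E) : ℝ := N.rate e / N.RE (N.src e)

/-- `IsPathFrom N M es` : the list of edges `es` is a path starting in the state `M`. -/
def IsPathFrom (N : RLFTS Act) : N.S → List N.E → Prop
  | _, [] => True
  | M, e :: es => N.src e = M ∧ IsPathFrom N (N.tgt e) es

/-- The list of states visited by a path starting in `M`. -/
def visits (N : RLFTS Act) : N.S → List N.E → List N.S
  | M, [] => [M]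
  | M, e :: es => M :: visits N (N.tgt e) es

/-- Execution probability of a path. -/
noncomputable def pathPT (N : RLFTS Act) (es : List N.E) : ℝ := (es.map N.PTe).prod

/-- Cumulative execution probability of the `(σ,ς,ϱ)`-selected paths starting in `M`. -/
noncomputable def PTsel (N : RLFTS Act) (M : N.S) (σ : List Act) (ς ϱ : List ℝ) : ℝ :=
  ∑ᶠ es ∈ {es : List N.E | IsPathFrom N M es ∧ es.map N.label = σ ∧
      (visits N M es).map N.SJ = ς ∧ (visits N M es).map N.RP = ϱ}, N.pathPT es

end RLFTS

namespace RLFTS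

variable {Act : Type}

/-- Source map on the disjoint union of the edges of two RLFTSs. -/
def csrc (N N' : RLFTS Act) : N.E ⊕ N'.E → N.S ⊕ N'.S := Sum.map N.src N'.src

/-- Target map on the disjoint union of the edges of two RLFTSs. -/
def ctgt (N N' : RLFTS Act) : N.E ⊕ N'.E → N.S ⊕ N'.S := Sum.map N.tgt N'.tgt

/-- Rate function on the disjoint union of the edges of two RLFTSs. -/
def crate (N N' : RLFTS Act) : N.E ⊕ N'.E → ℝ := Sum.elim N.rate N'.rate

/-- Labeling on the disjoint union of the edges of two RLFTSs. -/
def clabel (N N' : RLFTS Act) : N.E ⊕ N'.E → Act := Sum.elim N.label N'.label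

/-- Fluid-rate function on the disjoint union of the states of two RLFTSs. -/
def cRP (N N' : RLFTS Act) : N.S ⊕ N'.S → ℝ := Sum.elim N.RP N'.RP

/-- Overall rate to move from the state `s` into the set of states `H` by action `a`,
in the disjoint union of two RLFTSs. -/
noncomputable def RMa (N N' : RLFTS Act) (a : Act) (s : N.S ⊕ N'.S)
    (H : Set (N.S ⊕ N'.S)) : ℝ :=
  ∑ᶠ e ∈ {e : N.E ⊕ N'.E | csrc N N' e = s ∧ clabel N N' e = a ∧ ctgt N N' e ∈ H},
    crate N N' e

/-- `R` is a fluid bisimulation between the RLFTSs `N` and `N'`. -/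
def FluidBisim (N N' : RLFTS Act) (R : (N.S ⊕ N'.S) → (N.S ⊕ N'.S) → Prop) : Prop :=
  Equivalence R ∧ R (Sum.inl N.s0) (Sum.inr N'.s0) ∧
    ∀ s1 s2, R s1 s2 → cRP N N' s1 = cRP N N' s2 ∧
      ∀ (a : Act) (s : N.S ⊕ N'.S), RMa N N' a s1 {v | R s v} = RMa N N' a s2 {v | R s v}

/-- The RLFTSs `N` and `N'` are fluid bisimulation equivalent. -/
def FluidBisimEquiv (N N' : RLFTS Act) : Prop := ∃ R, FluidBisim N N' R

end RLFTS

namespace RLFTS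

variable {Act : Type}

/-- Overall rate to move from `s` into the set `H` by any action, in the disjoint union. -/
noncomputable def RMset (N N' : RLFTS Act) (s : N.S ⊕ N'.S) (H : Set (N.S ⊕ N'.S)) : ℝ :=
  ∑ᶠ e ∈ {e : N.E ⊕ N'.E | csrc N N' e = s ∧ ctgt N N' e ∈ H}, crate N N' e

/-- Overall rate to move from the state `s` to the state `u` within a single RLFTS. -/
noncomputable def RM1 (N : RLFTS Act) (s u : N.S) : ℝ :=
  ∑ᶠ e ∈ {e : N.E | N.src e = s ∧ N.tgt e = u}, N.rate e

end RLFTS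

namespace RLFTSaux

open RLFTS Classical

variable {Act : Type}

theorem edges_finite {S E : Type} [Finite S] (src : E → S)
    (hf : ∀ s : S, {e : E | src e = s}.Finite) : Finite E := by
  have h : (Set.univ : Set E) = ⋃ s : S, {e : E | src e = s} := by ext e; simp
  exact Set.finite_univ_iff.mp (h ▸ Set.finite_iUnion hf)

theorem RMset_inl (N N' : RLFTS Act) (s : N.S) (H : Set (N.S ⊕ N'.S)) :
    RMset N N' (Sum.inl s) H =
      ∑ᶠ e ∈ {e : N.E | N.src e = s ∧ Sum.inl (N.tgt e) ∈ H}, N.rate e := by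
  have hset : {e : N.E ⊕ N'.E | csrc N N' e = Sum.inl s ∧ ctgt N N' e ∈ H} =
      Sum.inl '' {e : N.E | N.src e = s ∧ Sum.inl (N.tgt e) ∈ H} := by
    ext e
    cases e with
    | inl e => simp [csrc, ctgt]
    | inr e => simp [csrc, ctgt]
  rw [RMset, hset, finsum_mem_image (Sum.inl_injective.injOn)]
  rfl

theorem RMset_inr (N N' : RLFTS Act) (s : N'.S) (H : Set (N.S ⊕ N'.S)) :
    RMset N N' (Sum.inr s) H =
      ∑ᶠ e ∈ {e : N'.E | N'.src e = s ∧ Sum.inr (N'.tgt e) ∈ H}, N'.rate e := by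
  have hset : {e : N.E ⊕ N'.E | csrc N N' e = Sum.inr s ∧ ctgt N N' e ∈ H} =
      Sum.inr '' {e : N'.E | N'.src e = s ∧ Sum.inr (N'.tgt e) ∈ H} := by
    ext e
    cases e with
    | inl e => simp [csrc, ctgt]
    | inr e => simp [csrc, ctgt]
  rw [RMset, hset, finsum_mem_image (Sum.inr_injective.injOn)]
  rfl

theorem RMset_eq_sum_labels (N N' : RLFTS Act) [Fintype (N.E ⊕ N'.E)]
    (s : N.S ⊕ N'.S) (H : Set (N.S ⊕ N'.S)) :
    RMset N N' s H =
      ∑ a ∈ Finset.univ.image (clabel N N'), RMa N N' a s H := by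
  classical
  have h1 : RMset N N' s H =
      ∑ e ∈ Finset.univ.filter
        (fun e => csrc N N' e = s ∧ ctgt N N' e ∈ H), crate N N' e := by
    rw [RMset, finsum_mem_eq_toFinset_sum, Set.toFinset_setOf]
  have h2 : ∀ a, RMa N N' a s H =
      ∑ e ∈ (Finset.univ.filter
          (fun e => csrc N N' e = s ∧ ctgt N N' e ∈ H)).filter
        (fun e => clabel N N' e = a), crate N N' e := by
    intro a
    rw [RMa, finsum_mem_eq_toFinset_sum, Set.toFinset_setOf, Finset.filter_filter]
    apply Finset.sum_congr _ (fun _ _ => rfl)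
    apply Finset.filter_congr
    intro e _; constructor <;> (intro h; tauto)
  simp only [h2, h1]
  exact (Finset.sum_fiberwise_of_maps_to
    (fun e _ => Finset.mem_image_of_mem (clabel N N') (Finset.mem_univ e)) _).symm

theorem RMset_invariant (N N' : RLFTS Act) [Finite N.S] [Finite N'.S]
    (R : (N.S ⊕ N'.S) → (N.S ⊕ N'.S) → Prop) (hR : FluidBisim N N' R)
    {s1 s2 : N.S ⊕ N'.S} (h : R s1 s2) (t : N.S ⊕ N'.S) :
    RMset N N' s1 {v | R t v} = RMset N N' s2 {v | R t v} := by
  haveI : Finite N.E := edges_finite N.src N.out_finite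
  haveI : Finite N'.E := edges_finite N'.src N'.out_finite
  haveI : Fintype (N.E ⊕ N'.E) := Fintype.ofFinite _
  rw [RMset_eq_sum_labels, RMset_eq_sum_labels]
  exact Finset.sum_congr rfl fun a _ => (hR.2.2 s1 s2 h).2 a t

theorem cRE_eq_RMset_univ (N N' : RLFTS Act) (s : N.S ⊕ N'.S) :
    Sum.elim N.RE N'.RE s = RMset N N' s Set.univ := by
  cases s with
  | inl s => rw [Sum.elim_inl, RMset_inl]; simp [RLFTS.RE]
  | inr s => rw [Sum.elim_inr, RMset_inr]; simp [RLFTS.RE]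

theorem RMset_univ_eq_sum_classes (N N' : RLFTS Act) [Finite N.S] [Finite N'.S]
    (R : (N.S ⊕ N'.S) → (N.S ⊕ N'.S) → Prop) (hEq : Equivalence R)
    (s : N.S ⊕ N'.S) :
    RMset N N' s Set.univ =
      ∑ᶠ H : Quotient (⟨R, hEq⟩ : Setoid (N.S ⊕ N'.S)),
        RMset N N' s {v | R H.out v} := by
  classical
  haveI : Finite N.E := edges_finite N.src N.out_finite
  haveI : Finite N'.E := edges_finite N'.src N'.out_finite
  haveI : Fintype (N.E ⊕ N'.E) := Fintype.ofFinite _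
  set sd : Setoid (N.S ⊕ N'.S) := ⟨R, hEq⟩
  haveI : Fintype (Quotient sd) := Fintype.ofFinite _
  rw [finsum_eq_sum_of_fintype]
  have h1 : RMset N N' s Set.univ =
      ∑ e ∈ Finset.univ.filter (fun e => csrc N N' e = s), crate N N' e := by
    rw [RMset, finsum_mem_eq_toFinset_sum, Set.toFinset_setOf]
    apply Finset.sum_congr _ (fun _ _ => rfl)
    apply Finset.filter_congr; intro e _; simp
  have h2 : ∀ H : Quotient sd, RMset N N' s {v | R H.out v} =
      ∑ e ∈ (Finset.univ.filter (fun e => csrc N N' e = s)).filter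
        (fun e => (Quotient.mk sd (ctgt N N' e) : Quotient sd) = H), crate N N' e := by
    intro H
    rw [RMset, finsum_mem_eq_toFinset_sum, Set.toFinset_setOf, Finset.filter_filter]
    apply Finset.sum_congr _ (fun _ _ => rfl)
    apply Finset.filter_congr
    intro e _
    have : R H.out (ctgt N N' e) ↔ (Quotient.mk sd (ctgt N N' e) : Quotient sd) = H := by
      rw [eq_comm, Quotient.eq_mk_iff_out]
      exact ⟨fun h => h, fun h => h⟩
    simp only [Set.mem_setOf_eq]
    tauto
  simp only [h2, h1]
  exact (Finset.sum_fiberwise_of_maps_to (fun e _ => Finset.mem_univ _) _).symm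

theorem cRE_invariant (N N' : RLFTS Act) [Finite N.S] [Finite N'.S]
    (R : (N.S ⊕ N'.S) → (N.S ⊕ N'.S) → Prop) (hR : FluidBisim N N' R)
    {s1 s2 : N.S ⊕ N'.S} (h : R s1 s2) :
    Sum.elim N.RE N'.RE s1 = Sum.elim N.RE N'.RE s2 := by
  rw [cRE_eq_RMset_univ, cRE_eq_RMset_univ,
    RMset_univ_eq_sum_classes N N' R hR.1, RMset_univ_eq_sum_classes N N' R hR.1]
  exact finsum_congr fun H => RMset_invariant N N' R hR h H.out

theorem sum_RM1_eq_RMset (N N' : RLFTS Act) [Fintype N.S] [Finite N.E]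
    (P : N.S ⊕ N'.S → Prop) (u : N.S) :
    ∑ s ∈ Finset.univ.filter (fun s => P (Sum.inl s)), RM1 N u s =
      RMset N N' (Sum.inl u) {v | P v} := by
  classical
  haveI : Fintype N.E := Fintype.ofFinite _
  rw [RMset_inl, finsum_mem_eq_toFinset_sum, Set.toFinset_setOf]
  have hRM1 : ∀ s, RM1 N u s =
      ∑ e ∈ Finset.univ.filter (fun e => N.src e = u ∧ N.tgt e = s), N.rate e := by
    intro s; rw [RM1, finsum_mem_eq_toFinset_sum, Set.toFinset_setOf]
  simp only [hRM1]
  set D : Finset N.E :=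
    Finset.univ.filter (fun e => N.src e = u ∧ Sum.inl (N.tgt e) ∈ {v | P v}) with hD
  have hmap : ∀ e ∈ D, N.tgt e ∈ Finset.univ.filter (fun s => P (Sum.inl s)) := by
    intro e he
    simp only [hD, Finset.mem_filter, Set.mem_setOf_eq] at he ⊢
    exact ⟨Finset.mem_univ _, he.2.2⟩
  rw [← Finset.sum_fiberwise_of_maps_to hmap N.rate]
  refine Finset.sum_congr rfl fun s hs => ?_
  have hPs : P (Sum.inl s) := (Finset.mem_filter.mp hs).2
  rw [hD, Finset.filter_filter]
  refine Finset.sum_congr (Finset.filter_congr fun e _ => ?_) fun _ _ => rfl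
  simp only [Set.mem_setOf_eq]
  constructor
  · rintro ⟨h1, h2⟩; exact ⟨⟨h1, h2 ▸ hPs⟩, h2⟩
  · rintro ⟨⟨h1, _⟩, h2⟩; exact ⟨h1, h2⟩

end RLFTSaux

/-- Let `R` be a fluid bisimulation between finite-state RLFTSs `N` and `N'` and let `F`
satisfy the stationary fluid distribution equations of `N`:
`RP(s)·(d/dx)F(x)(s) = Σ_u RM(u,s)·F(x)(u) − RE(s)·F(x)(s)` for `x > 0`, componentwise
differentiable on `(0,∞)`. Then for every `R`-equivalence class (with representative `w`)
the aggregate `G(x) = Σ_{s ∈ H∩S} F(x)(s)` satisfies the quotient equation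
`RP(H)·G′(x) = Σ_{H̃} RM(H̃,H)·G_{H̃}(x) − RE(H)·G(x)` for all `x > 0`. -/
theorem RLFTS.bisim_aggregate_fluidPDF_quotODE {Act : Type} (N N' : RLFTS Act)
    [Finite N.S] [Finite N'.S]
    (R : (N.S ⊕ N'.S) → (N.S ⊕ N'.S) → Prop) (hR : RLFTS.FluidBisim N N' R)
    (F : ℝ → N.S → ℝ)
    (hdiff : ∀ s : N.S, ∀ x ∈ Set.Ioi (0 : ℝ), DifferentiableAt ℝ (fun y => F y s) x)
    (hODE : ∀ x ∈ Set.Ioi (0 : ℝ), ∀ s : N.S,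
      N.RP s * deriv (fun y => F y s) x =
        (∑ᶠ u : N.S, RLFTS.RM1 N u s * F x u) - N.RE s * F x s)
    (w : N.S ⊕ N'.S) (x : ℝ) (hx : x ∈ Set.Ioi (0 : ℝ)) :
    Sum.elim N.RP N'.RP w *
        deriv (fun y => ∑ᶠ s ∈ {s : N.S | R w (Sum.inl s)}, F y s) x =
      (∑ᶠ H : Quotient (⟨R, hR.1⟩ : Setoid (N.S ⊕ N'.S)),
          RLFTS.RMset N N' H.out {v | R w v} *
            ∑ᶠ s ∈ {s : N.S | R H.out (Sum.inl s)}, F x s) -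
        Sum.elim N.RE N'.RE w * ∑ᶠ s ∈ {s : N.S | R w (Sum.inl s)}, F x s := by
  classical
  haveI : Finite N.E := RLFTSaux.edges_finite N.src N.out_finite
  haveI : Finite N'.E := RLFTSaux.edges_finite N'.src N'.out_finite
  haveI : Fintype N.S := Fintype.ofFinite _
  haveI : Fintype N'.S := Fintype.ofFinite _
  set sd : Setoid (N.S ⊕ N'.S) := ⟨R, hR.1⟩ with hsd
  haveI : Fintype (Quotient sd) := Fintype.ofFinite _
  set Hw : Set (N.S ⊕ N'.S) := {v | R w v} with hHw
  have hGen : ∀ t : N.S ⊕ N'.S, ∀ y : ℝ,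
      ∑ᶠ s ∈ {s : N.S | R t (Sum.inl s)}, F y s
        = ∑ s ∈ Finset.univ.filter (fun s => R t (Sum.inl s)), F y s := by
    intro t y
    rw [finsum_mem_eq_toFinset_sum, Set.toFinset_setOf]
  set A : Finset N.S := Finset.univ.filter (fun s => R w (Sum.inl s)) with hA
  have hfun : (fun y => ∑ᶠ s ∈ {s : N.S | R w (Sum.inl s)}, F y s)
      = fun y => ∑ s ∈ A, F y s := funext (hGen w)
  rw [hfun, hGen w x, deriv_fun_sum (fun s _ => hdiff s x hx), Finset.mul_sum]
  have hRP : ∀ s ∈ A, Sum.elim N.RP N'.RP w * deriv (fun y => F y s) x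
      = N.RP s * deriv (fun y => F y s) x := by
    intro s hs
    have h1 : R w (Sum.inl s) := (Finset.mem_filter.mp hs).2
    have h2 : Sum.elim N.RP N'.RP w = N.RP s := (hR.2.2 w (Sum.inl s) h1).1
    rw [h2]
  rw [Finset.sum_congr rfl hRP, Finset.sum_congr rfl (fun s _ => hODE x hx s),
    Finset.sum_sub_distrib]
  have hRE : ∑ s ∈ A, N.RE s * F x s = Sum.elim N.RE N'.RE w * ∑ s ∈ A, F x s := by
    rw [Finset.mul_sum]
    refine Finset.sum_congr rfl fun s hs => ?_
    have h1 : R w (Sum.inl s) := (Finset.mem_filter.mp hs).2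
    have h2 : Sum.elim N.RE N'.RE w = N.RE s := RLFTSaux.cRE_invariant N N' R hR h1
    rw [h2]
  rw [hRE]
  congr 1
  -- main term
  rw [finsum_eq_sum_of_fintype]
  have hswap : ∑ s ∈ A, ∑ᶠ u : N.S, RM1 N u s * F x u
      = ∑ u : N.S, ∑ s ∈ A, RM1 N u s * F x u := by
    simp only [finsum_eq_sum_of_fintype]
    exact Finset.sum_comm
  rw [hswap]
  have hC : ∀ u : N.S, ∑ s ∈ A, RM1 N u s * F x u
      = RMset N N' (Sum.inl u) Hw * F x u := by
    intro u
    rw [← Finset.sum_mul, hA, RLFTSaux.sum_RM1_eq_RMset N N' (fun v => R w v) u]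
  simp only [hC]
  have hinv : ∀ u : N.S, RMset N N' (Sum.inl u) Hw
      = RMset N N' (Quotient.mk sd (Sum.inl u)).out Hw := by
    intro u
    have h1 : R (Quotient.mk sd (Sum.inl u)).out (Sum.inl u) :=
      Quotient.exact (Quotient.out_eq (Quotient.mk sd (Sum.inl u)))
    exact (RLFTSaux.RMset_invariant N N' R hR h1 w).symm
  simp only [hinv]
  rw [← Finset.sum_fiberwise_of_maps_to
    (fun u (_ : u ∈ Finset.univ) => Finset.mem_univ (Quotient.mk sd (Sum.inl u)))
    (fun u => RMset N N' (Quotient.mk sd (Sum.inl u)).out Hw * F x u)]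
  refine Finset.sum_congr rfl fun H _ => ?_
  have hinner : ∀ u ∈ Finset.univ.filter
      (fun u => (Quotient.mk sd (Sum.inl u) : Quotient sd) = H),
      RMset N N' (Quotient.mk sd (Sum.inl u)).out Hw * F x u
        = RMset N N' H.out Hw * F x u := by
    intro u hu
    rw [(Finset.mem_filter.mp hu).2]
  rw [Finset.sum_congr rfl hinner, ← Finset.mul_sum, hGen H.out x]
  congr 1
  refine Finset.sum_congr (Finset.filter_congr fun u _ => ?_) fun _ _ => rfl
  rw [eq_comm, Quotient.eq_mk_iff_out]
  exact ⟨fun h => h, fun h => h⟩
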